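/- arXiv:1007.3000 — 5 statements merged into one kernel-verified Lean document; each statement's English description precedes it below -/
import Mathlib

section
/- There exists a constant c₂ > 0 such that for all ε > 0 sufficiently small and all t with −√ε ≤ t ≤ √ε, we have ∫_{−1}^{t} exp((t² − s²)/(2ε)) ds ≤ c₂·√ε. -/
/-! Factor `exp ((t² - s²)/(2ε)) = exp (t²/(2ε)) · exp (-s²/(2ε))`. The first factor is at most
`exp (1/2)` when `t² ≤ ε`, and the integral of the second over any interval is at most the full
Gaussian integral `√(2πε)`. -/

open MeasureTheory Real

theorem intervalIntegral_le_integral_of_nonneg {f : ℝ → ℝ} (hf : 0 ≤ f) (hfi : Integrable f)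
    (a b : ℝ) : ∫ x in a..b, f x ≤ ∫ x, f x := by
  rcases le_total a b with hab | hba
  · rw [intervalIntegral.integral_of_le hab]
    exact setIntegral_le_integral hfi (.of_forall hf)
  · rw [intervalIntegral.integral_of_ge hba, neg_le]
    exact (neg_nonpos.mpr (integral_nonneg hf)).trans (setIntegral_nonneg measurableSet_Ioc
      fun x _ => hf x)

/-- For `ε ≤ 0` both sides are junk `0`: the integrand is not integrable and `√` clamps at `0`. -/
theorem integral_exp_neg_sq_div (ε : ℝ) :
    ∫ s, exp (-s ^ 2 / (2 * ε)) = √(2 * π * ε) := by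
  have h := integral_gaussian (1 / (2 * ε))
  simp only [neg_mul, one_div_mul_eq_div, div_div_eq_mul_div, div_one] at h
  rw [mul_comm 2 π, mul_assoc, ← h]
  simp only [neg_div]

theorem intervalIntegral_exp_sq_sub_sq_div_le {ε : ℝ} (hε : 0 < ε) (a t : ℝ) :
    ∫ s in a..t, exp ((t ^ 2 - s ^ 2) / (2 * ε)) ≤ exp (t ^ 2 / (2 * ε)) * √(2 * π * ε) := by
  have hsplit (s : ℝ) :
      exp ((t ^ 2 - s ^ 2) / (2 * ε)) = exp (t ^ 2 / (2 * ε)) * exp (-s ^ 2 / (2 * ε)) := by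
    rw [← exp_add]
    ring_nf
  have hint : Integrable fun s : ℝ => exp (-s ^ 2 / (2 * ε)) := by
    simpa [neg_div, div_eq_inv_mul, sq] using
      integrable_exp_neg_mul_sq (b := (2 * ε)⁻¹) (by positivity)
  simp only [hsplit, intervalIntegral.integral_const_mul]
  rw [← integral_exp_neg_sq_div ε]
  exact mul_le_mul_of_nonneg_left
    (intervalIntegral_le_integral_of_nonneg (fun s => (exp_pos _).le) hint a t) (exp_pos _).le

/-- For `|t| ≤ √ε`, the integral `∫_{−1}^{t} exp((t² − s²)/(2ε)) ds` is `O(√ε)`. -/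
theorem stmt_6 :
    ∃ c₂ ε₀ : ℝ, 0 < c₂ ∧ 0 < ε₀ ∧
      ∀ ε : ℝ, 0 < ε → ε ≤ ε₀ →
        ∀ t : ℝ, -Real.sqrt ε ≤ t → t ≤ Real.sqrt ε →
          (∫ s in (-1 : ℝ)..t, Real.exp ((t ^ 2 - s ^ 2) / (2 * ε))) ≤
            c₂ * Real.sqrt ε := by
  refine ⟨exp (1 / 2) * √(2 * π), 1, by positivity, one_pos, fun ε hε _ t ht₁ ht₂ => ?_⟩
  have ht : t ^ 2 ≤ ε := by
    simpa [sq_abs, sq_sqrt hε.le] using pow_le_pow_left₀ (abs_nonneg t) (abs_le.mpr ⟨ht₁, ht₂⟩) 2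
  have hexp : exp (t ^ 2 / (2 * ε)) ≤ exp (1 / 2) := by
    rw [exp_le_exp, div_le_iff₀ (by positivity)]
    linarith
  calc ∫ s in (-1 : ℝ)..t, exp ((t ^ 2 - s ^ 2) / (2 * ε))
      ≤ exp (t ^ 2 / (2 * ε)) * √(2 * π * ε) := intervalIntegral_exp_sq_sub_sq_div_le hε _ t
    _ ≤ exp (1 / 2) * √(2 * π * ε) := by gcongr
    _ = exp (1 / 2) * √(2 * π) * √ε := by rw [sqrt_mul (by positivity), mul_assoc]
end

section
/- There exists a constant c₂ > 0 such that for all ε > 0 sufficiently small and all t with −1 ≤ t ≤ −√ε, we have ∫_{−1}^{t} exp((t² − s²)/(2ε)) ds ≤ c₂·ε/|t|. -/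
open Real intervalIntegral

/-!
Since `t² − s² = 2t(t − s) − (t − s)²`, the integrand is at most `exp ((t/ε)(t − s))`, whose
integral over `s ≤ t` is at most `ε/|t|`; so `c₂ = 1` works for every `ε > 0`.
-/

lemma sq_sub_sq_le_two_mul_mul_sub (s t : ℝ) : t ^ 2 - s ^ 2 ≤ 2 * t * (t - s) := by
  nlinarith [sq_nonneg (t - s)]

lemma integral_exp_mul_sub_eq {a : ℝ} (ha : a ≠ 0) (b t : ℝ) :
    ∫ s in b..t, exp (a * (t - s)) = (exp (a * (t - b)) - 1) / a := by
  simp only [mul_sub, integral_comp_sub_mul _ ha, sub_self, integral_exp, exp_zero, smul_eq_mul,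
    mul_one]
  field_simp

lemma integral_exp_mul_sub_le {a : ℝ} (ha : a < 0) (b t : ℝ) :
    ∫ s in b..t, exp (a * (t - s)) ≤ 1 / -a := by
  rw [integral_exp_mul_sub_eq ha.ne, ← neg_div_neg_eq]
  exact div_le_div_of_nonneg_right (by linarith [exp_pos (a * (t - b))]) (by linarith)

/-- For `−1 ≤ t ≤ −√ε`, the integral `∫_{−1}^{t} exp((t² − s²)/(2ε)) ds` is `O(ε/|t|)`. -/
theorem stmt_7 :
    ∃ c₂ ε₀ : ℝ, 0 < c₂ ∧ 0 < ε₀ ∧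
      ∀ ε : ℝ, 0 < ε → ε ≤ ε₀ →
        ∀ t : ℝ, -1 ≤ t → t ≤ -Real.sqrt ε →
          (∫ s in (-1 : ℝ)..t, Real.exp ((t ^ 2 - s ^ 2) / (2 * ε))) ≤
            c₂ * ε / |t| := by
  refine ⟨1, 1, one_pos, one_pos, fun ε hε _ t ht₁ ht => ?_⟩
  have ht₀ : t < 0 := ht.trans_lt (neg_lt_zero.mpr (sqrt_pos.mpr hε))
  calc ∫ s in (-1 : ℝ)..t, exp ((t ^ 2 - s ^ 2) / (2 * ε))
      ≤ ∫ s in (-1 : ℝ)..t, exp (t / ε * (t - s)) := by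
        refine integral_mono_on ht₁ (Continuous.intervalIntegrable (by fun_prop) _ _)
          (Continuous.intervalIntegrable (by fun_prop) _ _) fun s _ => exp_le_exp.mpr ?_
        calc (t ^ 2 - s ^ 2) / (2 * ε) ≤ 2 * t * (t - s) / (2 * ε) := by
              gcongr; exact sq_sub_sq_le_two_mul_mul_sub s t
          _ = t / ε * (t - s) := by field_simp
    _ ≤ 1 / -(t / ε) := integral_exp_mul_sub_le (div_neg_of_neg_of_pos ht₀ hε) _ _
    _ = 1 * ε / |t| := by rw [abs_of_neg ht₀]; field_simp
end

section
/- Let x, y : [0, ∞) → ℝ be continuous with x(0) = y(0), and suppose x(t) = x(0) + ∫_0^t a(s, x(s)) ds + C·w(t) and y(t) = x(0) + ∫_0^t c(s, y(s)) ds + C·w(t) for continuous functions a, c : [0,∞) × ℝ → ℝ, a continuous function w : [0,∞) → ℝ, and a constant C. If a(t, x) < c(t, x) for all t ≥ 0 and all x, then y(t) ≥ x(t) for all t ≥ 0. -/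
/-! Subtracting the two equations cancels the noise term `C * w`, so `x ≤ y` amounts to comparing
the primitives of `s ↦ a s (x s)` and `s ↦ c s (y s)`. These are differentiable, and wherever they
meet we have `x = y`, hence their derivatives are strictly ordered there; the fencing theorem
`image_le_of_deriv_right_lt_deriv_boundary'` then keeps one primitive below the other. -/

theorem intervalIntegral.integral_le_integral_of_lt_of_integral_eq {p q : ℝ → ℝ}
    (hp : Continuous p) (hq : Continuous q) {a b : ℝ} (hab : a ≤ b)
    (hcontact : ∀ s ∈ Set.Ico a b, ∫ u in a..s, p u = ∫ u in a..s, q u → p s < q s) :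
    ∫ u in a..b, p u ≤ ∫ u in a..b, q u := by
  have hP : ∀ s, HasDerivAt (fun t => ∫ u in a..t, p u) (p s) s := fun s =>
    (hp.integral_hasStrictDerivAt a s).hasDerivAt
  have hQ : ∀ s, HasDerivAt (fun t => ∫ u in a..t, q u) (q s) s := fun s =>
    (hq.integral_hasStrictDerivAt a s).hasDerivAt
  exact image_le_of_deriv_right_lt_deriv_boundary'
    (fun s _ => (hP s).continuousAt.continuousWithinAt) (fun s _ => (hP s).hasDerivWithinAt)
    (by simp) (fun s _ => (hQ s).continuousAt.continuousWithinAt)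
    (fun s _ => (hQ s).hasDerivWithinAt) hcontact ⟨hab, le_rfl⟩

theorem stmt_14_general (a c : ℝ → ℝ → ℝ) (ha : Continuous (Function.uncurry a))
    (hc : Continuous (Function.uncurry c)) (w : ℝ → ℝ) (C : ℝ)
    (x y : ℝ → ℝ) (hx : Continuous x) (hy : Continuous y)
    (hxeq : ∀ t, 0 ≤ t → x t = x 0 + (∫ s in (0 : ℝ)..t, a s (x s)) + C * w t)
    (hyeq : ∀ t, 0 ≤ t → y t = x 0 + (∫ s in (0 : ℝ)..t, c s (y s)) + C * w t)
    (hlt : ∀ t, 0 ≤ t → ∀ u : ℝ, a t u < c t u) :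
    ∀ t, 0 ≤ t → x t ≤ y t := by
  intro t ht
  have hdrift : ∫ s in (0 : ℝ)..t, a s (x s) ≤ ∫ s in (0 : ℝ)..t, c s (y s) := by
    refine intervalIntegral.integral_le_integral_of_lt_of_integral_eq
      (p := fun s => a s (x s)) (q := fun s => c s (y s))
      (ha.comp (continuous_id.prodMk hx)) (hc.comp (continuous_id.prodMk hy)) ht ?_
    rintro s ⟨hs, -⟩ hmeet
    have hxy : x s = y s := by rw [hxeq s hs, hyeq s hs, hmeet]
    simpa only [hxy] using hlt s hs (y s)
  rw [hxeq t ht, hyeq t ht]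
  linarith

/-- A pathwise comparison principle for one-dimensional integral equations
driven by the same continuous path, with strictly ordered drifts. -/
theorem stmt_14 (a c : ℝ → ℝ → ℝ) (ha : Continuous (Function.uncurry a))
    (hc : Continuous (Function.uncurry c)) (w : ℝ → ℝ) (hw : Continuous w) (C : ℝ)
    (x y : ℝ → ℝ) (hx : Continuous x) (hy : Continuous y)
    (hxy0 : y 0 = x 0)
    (hxeq : ∀ t, 0 ≤ t → x t = x 0 + (∫ s in (0 : ℝ)..t, a s (x s)) + C * w t)
    (hyeq : ∀ t, 0 ≤ t → y t = x 0 + (∫ s in (0 : ℝ)..t, c s (y s)) + C * w t)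
    (hlt : ∀ t, 0 ≤ t → ∀ u : ℝ, a t u < c t u) :
    ∀ t, 0 ≤ t → x t ≤ y t :=
  stmt_14_general a c ha hc w C x y hx hy hxeq hyeq hlt
end

section
/- Assume κ > 1/2 and ε > 0 sufficiently small (κ > 1/2 + ε suffices). For t ≥ √ε, on the curve q = −√((1−κ)t) the deterministic drift satisfies (1/ε)(t·q − q³ + ε) < d/dt[−√((1−κ)t)], i.e., (1/ε)·t^{3/2}·(−κ + ε')·√(1−κ) < −(1/2)t^{−1/2}√(1−κ) where the drift on the curve equals (1/ε)(−κ√(1−κ)t^{3/2} + ε). Hence a deterministic solution that exits the set {|q| ≤ √((1−κ)t)} through the lower boundary cannot re-enter it. -/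
/-!
Write `c = 1 - κ` and `s = √(c t)`, so that `s² = c t`. On the curve `q = -s` the cubic drift
collapses to `-κ t s`, while the curve has slope `-c / (2 s)`. Clearing denominators, the claim
becomes `ε s + ε c / 2 < κ c t²`. The hypothesis `√ε ≤ t` gives `ε c / 2 ≤ c t² / 2`, and for
`ε ≤ ((κ - 1/2) c / 2)⁴ / c²` it also gives `ε s ≤ (κ - 1/2) c t² / 2`, which closes the gap since
`κ > 1/2`.
-/

open Real

lemma hasDerivAt_neg_sqrt_const_mul {c t : ℝ} (h : 0 < c * t) :
    HasDerivAt (fun u => -√(c * u)) (-(c / (2 * √(c * t)))) t := by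
  have hlin : HasDerivAt (fun u => c * u) c t := by simpa using (hasDerivAt_id t).const_mul c
  exact (hlin.sqrt h.ne').neg

lemma cubic_drift_on_neg_sqrt {κ t : ℝ} (h : 0 ≤ (1 - κ) * t) :
    t * (-√((1 - κ) * t)) - (-√((1 - κ) * t)) ^ 3 = -(κ * t * √((1 - κ) * t)) := by
  linear_combination √((1 - κ) * t) * sq_sqrt h

lemma mul_sqrt_const_mul_le {ε c δ t : ℝ} (hε : 0 ≤ ε) (hc : 0 ≤ c) (hδ : 0 ≤ δ) (ht : 0 ≤ t)
    (hεt : ε ≤ t ^ 2) (hεδ : ε * c ^ 2 ≤ δ ^ 4) : ε * √(c * t) ≤ δ * t ^ 2 := by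
  have hs : √(c * t) ^ 2 = c * t := sq_sqrt (mul_nonneg hc ht)
  have hε3 : ε ^ 3 ≤ t ^ 6 := by
    simpa [← pow_mul] using pow_le_pow_left₀ hε hεt 3
  refine (pow_le_pow_iff_left₀ (by positivity) (by positivity) four_ne_zero).mp ?_
  calc (ε * √(c * t)) ^ 4 = (ε * c ^ 2) * ε ^ 3 * t ^ 2 := by
        rw [show (ε * √(c * t)) ^ 4 = ε ^ 4 * (√(c * t) ^ 2) ^ 2 by ring, hs]; ring
    _ ≤ δ ^ 4 * t ^ 6 * t ^ 2 := by gcongr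
    _ = (δ * t ^ 2) ^ 4 := by ring

lemma drift_lt_neg_slope {ε κ c t s : ℝ} (hε : 0 < ε) (hs : 0 < s)
    (h : ε * s + ε * c / 2 < κ * t * s ^ 2) :
    1 / ε * (-(κ * t * s) + ε) < -(c / (2 * s)) := by
  rw [one_div, inv_mul_eq_div, ← neg_div, div_lt_div_iff₀ hε (by positivity)]
  nlinarith

/-- For `κ > 1/2` and `ε` small, on the lower boundary `q = −√((1−κ)t)`, `t ≥ √ε`,
the deterministic drift is smaller than the slope of the boundary curve, so a
solution leaving through the lower boundary cannot re-enter. -/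
theorem stmt_16 (κ : ℝ) (hκ1 : 1 / 2 < κ) (hκ2 : κ < 1) :
    ∃ ε₀ : ℝ, 0 < ε₀ ∧
      ∀ ε : ℝ, 0 < ε → ε ≤ ε₀ →
        ∀ t : ℝ, Real.sqrt ε ≤ t →
          (1 / ε) * (t * (-Real.sqrt ((1 - κ) * t)) -
              (-Real.sqrt ((1 - κ) * t)) ^ 3 + ε) <
            deriv (fun u => -Real.sqrt ((1 - κ) * u)) t := by
  have hc : 0 < 1 - κ := by linarith
  have hδ : 0 < (κ - 1 / 2) * (1 - κ) / 2 := by positivity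
  refine ⟨((κ - 1 / 2) * (1 - κ) / 2) ^ 4 / (1 - κ) ^ 2, by positivity, fun ε hε hεδ t hεt => ?_⟩
  have ht : 0 < t := (sqrt_pos.mpr hε).trans_le hεt
  have hεt2 : ε ≤ t ^ 2 := (sqrt_le_iff.mp hεt).2
  have hct : 0 < (1 - κ) * t := mul_pos hc ht
  have hεs : ε * √((1 - κ) * t) ≤ (κ - 1 / 2) * (1 - κ) / 2 * t ^ 2 :=
    mul_sqrt_const_mul_le hε.le hc.le hδ.le ht.le hεt2 ((le_div_iff₀ (by positivity)).mp hεδ)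
  rw [(hasDerivAt_neg_sqrt_const_mul hct).deriv, cubic_drift_on_neg_sqrt hct.le]
  refine drift_lt_neg_slope hε (sqrt_pos.mpr hct) ?_
  rw [sq_sqrt hct.le]
  have hεκ : ε * (1 - κ) ≤ t ^ 2 * (1 - κ) := mul_le_mul_of_nonneg_right hεt2 hc.le
  have hgap : 0 < (κ - 1 / 2) * (1 - κ) * t ^ 2 := by positivity
  linarith
end

section
/- Let ε, β, δ > 0 with β > δ, and let g : ℝ → ℝ be continuously differentiable with |g| ≤ C₀ and |g'| ≤ L. Then for all t ≥ −T + 2ε^{β−δ}, the quantity ε^{−β}∫_{−T}^{t} e^{−(t−s)ε^{−β}} g(s) ds differs from g(t) by at most C₀(1 + e^{−ε^{−δ}})·e^{−ε^{−δ}} + L·ε^{β}. More precisely: |ε^{−β}∫_{−T}^{t} e^{−(t−s)ε^{−β}} g(s) ds − g(t)| ≤ 2C₀ e^{−ε^{−δ}} + L ε^{β}. -/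
/-!
The kernel `s ↦ a e^{-(t-s)a}` has mass `1 - e^{-(t+T)a}` on `[-T, t]`, so the error is
`∫ a e^{-(t-s)a} (g s - g t) ds` up to the missing mass times `g t`. Splitting at `m = t - r`,
the far part is at most `2C₀ e^{-ra}` by the sup bound on `g`, and the near part at most
`L ∫ a e^{-(t-s)a} (t - s) ds ≤ L / a` by the Lipschitz bound. With `a = ε^{-β}` and
`r = ε^{β-δ}` this gives `2C₀ e^{-ε^{-δ}} + L ε^β`.
-/

open MeasureTheory Real

theorem hasDerivAt_exp_kernel (a t s : ℝ) :
    HasDerivAt (fun s => exp (-(t - s) * a)) (a * exp (-(t - s) * a)) s := by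
  have h : HasDerivAt (fun s : ℝ => -(t - s) * a) a s := by
    simpa using ((hasDerivAt_id s).const_sub t).neg.mul_const a
  simpa [mul_comm] using h.exp

theorem integral_exp_kernel (a t c d : ℝ) :
    ∫ s in c..d, a * exp (-(t - s) * a) = exp (-(t - d) * a) - exp (-(t - c) * a) :=
  intervalIntegral.integral_eq_sub_of_hasDerivAt (fun s _ => hasDerivAt_exp_kernel a t s)
    ((by fun_prop : Continuous fun s => a * exp (-(t - s) * a)).intervalIntegrable c d)

theorem integral_exp_kernel_mul_sub_le {a c t : ℝ} (ha : 0 < a) (hct : c ≤ t) :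
    ∫ s in c..t, a * exp (-(t - s) * a) * (t - s) ≤ 1 / a := by
  have hF : ∀ s, HasDerivAt (fun s => (t - s + 1 / a) * exp (-(t - s) * a))
      (a * exp (-(t - s) * a) * (t - s)) s := by
    intro s
    refine ((((hasDerivAt_id' s).const_sub t).add_const (1 / a)).mul
      (hasDerivAt_exp_kernel a t s)).congr_deriv ?_
    field_simp
    ring
  rw [intervalIntegral.integral_eq_sub_of_hasDerivAt (fun s _ => hF s)
    ((by fun_prop : Continuous fun s => a * exp (-(t - s) * a) * (t - s)).intervalIntegrable c t)]
  have : 0 ≤ (t - c + 1 / a) * exp (-(t - c) * a) := by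
    have := sub_nonneg.2 hct
    positivity
  simp only [sub_self, zero_add, neg_zero, zero_mul, exp_zero, mul_one]
  linarith

theorem abs_integral_exp_kernel_mul_le_of_abs_le {f : ℝ → ℝ} {a M c d t : ℝ} (ha : 0 ≤ a)
    (hcd : c ≤ d) (hf : ∀ s ∈ Set.Ioc c d, |f s| ≤ M) :
    |∫ s in c..d, a * exp (-(t - s) * a) * f s| ≤
      M * (exp (-(t - d) * a) - exp (-(t - c) * a)) := by
  rw [← Real.norm_eq_abs]
  refine (intervalIntegral.norm_integral_le_of_norm_le hcd
    (g := fun s => a * exp (-(t - s) * a) * M) (ae_of_all _ fun s hs => ?_)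
    (Continuous.intervalIntegrable (by fun_prop) _ _)).trans_eq ?_
  · rw [Real.norm_eq_abs, abs_mul, abs_of_nonneg (by positivity : 0 ≤ a * exp (-(t - s) * a))]
    exact mul_le_mul_of_nonneg_left (hf s hs) (by positivity)
  · rw [intervalIntegral.integral_mul_const, integral_exp_kernel, mul_comm]

theorem abs_integral_exp_kernel_mul_le_of_abs_le_mul_sub {f : ℝ → ℝ} {a L c t : ℝ}
    (ha : 0 < a) (hL : 0 ≤ L) (hct : c ≤ t) (hf : ∀ s ∈ Set.Ioc c t, |f s| ≤ L * (t - s)) :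
    |∫ s in c..t, a * exp (-(t - s) * a) * f s| ≤ L / a := by
  rw [← Real.norm_eq_abs]
  refine (intervalIntegral.norm_integral_le_of_norm_le hct
    (g := fun s => a * exp (-(t - s) * a) * (t - s) * L) (ae_of_all _ fun s hs => ?_)
    (Continuous.intervalIntegrable (by fun_prop) _ _)).trans ?_
  · rw [Real.norm_eq_abs, abs_mul, abs_of_pos (by positivity : 0 < a * exp (-(t - s) * a)),
      mul_assoc _ (t - s), mul_comm (t - s)]
    exact mul_le_mul_of_nonneg_left (hf s hs) (by positivity)
  · rw [intervalIntegral.integral_mul_const, div_eq_mul_inv, mul_comm L, ← one_div]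
    exact mul_le_mul_of_nonneg_right (integral_exp_kernel_mul_sub_le ha hct) hL

theorem abs_mul_integral_exp_kernel_sub_le {g : ℝ → ℝ} {C L a r T t : ℝ} (hg : Continuous g)
    (hgC : ∀ s, |g s| ≤ C) (hgL : ∀ s u, |g s - g u| ≤ L * |s - u|)
    (ha : 0 < a) (hr : 0 ≤ r) (ht : T + r ≤ t) :
    |a * (∫ s in T..t, exp (-(t - s) * a) * g s) - g t| ≤ 2 * C * exp (-(r * a)) + L / a := by
  set E : ℝ → ℝ := fun s => exp (-(t - s) * a) with hE
  set m := t - r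
  have hint : ∀ c d, IntervalIntegrable (fun s => a * E s * (g s - g t)) volume c d :=
    fun c d => (by fun_prop : Continuous fun s => a * E s * (g s - g t)).intervalIntegrable c d
  have hsplit : a * (∫ s in T..t, E s * g s) - g t =
      (∫ s in T..m, a * E s * (g s - g t)) + (∫ s in m..t, a * E s * (g s - g t)) -
        E T * g t := by
    rw [intervalIntegral.integral_add_adjacent_intervals (hint _ _) (hint _ _)]
    simp only [mul_sub]
    rw [intervalIntegral.integral_sub, intervalIntegral.integral_mul_const, integral_exp_kernel,
      ← intervalIntegral.integral_const_mul]
    · simp only [hE, mul_assoc, sub_self, neg_zero, zero_mul, exp_zero]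
      ring
    all_goals exact Continuous.intervalIntegrable (by fun_prop) _ _
  have hfar : |∫ s in T..m, a * E s * (g s - g t)| ≤ 2 * C * (E m - E T) :=
    abs_integral_exp_kernel_mul_le_of_abs_le ha.le (by linarith) fun s _ => by
      linarith [abs_sub (g s) (g t), hgC s, hgC t]
  have hnear : |∫ s in m..t, a * E s * (g s - g t)| ≤ L / a := by
    refine abs_integral_exp_kernel_mul_le_of_abs_le_mul_sub ha
      (by simpa using (abs_nonneg _).trans (hgL 1 0)) (by linarith) fun s hs => ?_
    simpa [abs_sub_comm s, abs_of_nonneg (sub_nonneg.2 hs.2)] using hgL s t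
  have hEm : E m = exp (-(r * a)) := by
    simp only [hE, m]
    ring_nf
  have hETg : |E T * g t| ≤ E T * C := by
    rw [abs_mul, abs_of_pos (exp_pos _)]
    exact mul_le_mul_of_nonneg_left (hgC t) (exp_pos _).le
  rw [hsplit, ← hEm]
  calc _ ≤ |∫ s in T..m, a * E s * (g s - g t)| + |∫ s in m..t, a * E s * (g s - g t)| +
        |E T * g t| := (abs_sub _ _).trans (by gcongr; exact abs_add_le _ _)
    _ ≤ 2 * C * (E m - E T) + L / a + E T * C := by gcongr
    _ ≤ 2 * C * E m + L / a := by
      nlinarith [exp_pos (-(t - T) * a), (abs_nonneg _).trans (hgC 0)]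

theorem stmt_18_general (ε β δ T C₀ L : ℝ) (hε : 0 < ε)
    (g : ℝ → ℝ) (hg : ContDiff ℝ 1 g)
    (hgC : ∀ s, |g s| ≤ C₀) (hgL : ∀ s, |deriv g s| ≤ L) :
    ∀ t : ℝ, -T + 2 * ε ^ (β - δ) ≤ t →
      |ε ^ (-β) * (∫ s in (-T)..t, Real.exp (-(t - s) * ε ^ (-β)) * g s) - g t| ≤
        2 * C₀ * Real.exp (-ε ^ (-δ)) + L * ε ^ β := by
  intro t ht
  have hLip : ∀ s u, |g s - g u| ≤ L * |s - u| := fun s u => by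
    simpa [Real.norm_eq_abs] using convex_univ.norm_image_sub_le_of_norm_deriv_le
      (fun x _ => (hg.differentiable one_ne_zero) x) (fun x _ => hgL x) (Set.mem_univ u)
      (Set.mem_univ s)
  have hr : 0 ≤ ε ^ (β - δ) := (rpow_pos_of_pos hε _).le
  have h := abs_mul_integral_exp_kernel_sub_le hg.continuous hgC hLip (rpow_pos_of_pos hε (-β)) hr
    (by linarith : -T + ε ^ (β - δ) ≤ t)
  rwa [← rpow_add hε, show β - δ + -β = -δ by ring, div_eq_mul_inv, ← rpow_neg hε.le, neg_neg]
    at h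

/-- Laplace-method estimate: the exponential kernel `ε^{−β} e^{−(t−s)ε^{−β}}`
averages `g` to within `2C₀ e^{−ε^{−δ}} + L ε^β` of `g(t)`. -/
theorem stmt_18 (ε β δ T C₀ L : ℝ) (hε : 0 < ε) (hβ : 0 < β) (hδ : 0 < δ)
    (hβδ : δ < β) (g : ℝ → ℝ) (hg : ContDiff ℝ 1 g)
    (hgC : ∀ s, |g s| ≤ C₀) (hgL : ∀ s, |deriv g s| ≤ L) :
    ∀ t : ℝ, -T + 2 * ε ^ (β - δ) ≤ t →
      |ε ^ (-β) * (∫ s in (-T)..t, Real.exp (-(t - s) * ε ^ (-β)) * g s) - g t| ≤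
        2 * C₀ * Real.exp (-ε ^ (-δ)) + L * ε ^ β :=
  stmt_18_general ε β δ T C₀ L hε g hg hgC hgL
end
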